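/- Equip the space C(ℝ, ℝ) of continuous real-valued functions on ℝ with the increasing sequence of seminorms ‖f‖ᵢ = sup_{t∈[−i,i]} |f(t)| for i ∈ ℕ, i ≥ 1. This graded Fréchet space is not of almost universal disposition for finite-dimensional graded Fréchet spaces: there exist ε > 0, finite-dimensional graded Fréchet spaces X ⊆ Y and an isometric embedding f₀ : X → C(ℝ,ℝ) admitting no ε-isometric embedding f : Y → C(ℝ,ℝ) with f ↾ X = f₀. -/

import Mathlib

open Set

/-- Restriction to the compact interval `[-(i+1), i+1]`, as a linear map on `C(ℝ, ℝ)`. -/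
noncomputable def restrictIccL (i : ℕ) :
    C(ℝ, ℝ) →ₗ[ℝ] C(Icc (-(i : ℝ) - 1) ((i : ℝ) + 1), ℝ) where
  toFun f := f.restrict (Icc (-(i : ℝ) - 1) ((i : ℝ) + 1))
  map_add' f g := rfl
  map_smul' c f := rfl

/-- The seminorm `‖f‖ᵢ = sup_{t ∈ [-(i+1), i+1]} |f t|` on `C(ℝ, ℝ)` (the sequence of seminorms
`‖f‖ᵢ = sup_{t ∈ [-i, i]} |f t|`, `i ≥ 1`, reindexed over `ℕ`). -/
noncomputable def supIccSeminorm (i : ℕ) : Seminorm ℝ C(ℝ, ℝ) :=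
  (normSeminorm ℝ C(Icc (-(i : ℝ) - 1) ((i : ℝ) + 1), ℝ)).comp (restrictIccL i)

/-- A bundled finite-dimensional graded Fréchet space. -/
structure FinGradedFrechet where
  carrier : Type
  [acg : AddCommGroup carrier]
  [mod : Module ℝ carrier]
  [fd : FiniteDimensional ℝ carrier]
  seminorms : ℕ → Seminorm ℝ carrier
  mono : Monotone seminorms
  separating : ∀ x : carrier, (∀ i : ℕ, seminorms i x = 0) → x = 0

attribute [instance] FinGradedFrechet.acg FinGradedFrechet.mod FinGradedFrechet.fd

/-!
Take `Y = ℓ∞²` (the same norm at every level), `X = ℝ × 0` and `f₀ (a, 0) = a • 1`. If `f`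
extends `f₀` with distortion `c`, write `h = f (0, 1)`, so that `f (1, t) = 1 + t • h`. At a point
`s` with `h s ≠ 0`, the choice `t = 1 / h s` makes `f (1, t)` equal to `2` at `s`, whence
`2 ≤ c * max 1 |t|` and so `|h s| ≤ c / 2` once `c < 2`. On the other hand the seminorm of `h` is at
least `c⁻¹`, forcing `c² ≥ 2`; `ε = 1 / 5` gives `c² = 36 / 25 < 2`.
-/

theorem abs_le_half_of_forall_abs_one_add_mul_le {c y : ℝ} (hc : c < 2)
    (h : ∀ t : ℝ, |1 + t * y| ≤ c * max 1 |t|) : |y| ≤ c / 2 := by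
  have hc₀ : 0 ≤ c := by simpa using (abs_nonneg _).trans (h 0)
  rcases eq_or_ne y 0 with rfl | hy
  · simpa using div_nonneg hc₀ zero_le_two
  have key : 2 ≤ c * max 1 |y|⁻¹ := by
    simpa [inv_mul_cancel₀ hy, one_add_one_eq_two] using h y⁻¹
  rcases le_total 1 |y|⁻¹ with hmax | hmax
  · rw [max_eq_right hmax, ← div_eq_mul_inv, le_div_iff₀ (abs_pos.mpr hy)] at key
    linarith
  · rw [max_eq_left hmax] at key
    linarith

theorem ContinuousMap.norm_le_half_of_norm_one_add_smul_le {K : Type*} [TopologicalSpace K]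
    [CompactSpace K] {h : C(K, ℝ)} {c : ℝ} (hc : c < 2)
    (hh : ∀ t : ℝ, ‖1 + t • h‖ ≤ c * max 1 |t|) : ‖h‖ ≤ c / 2 := by
  have hc₀ : 0 ≤ c := by simpa using (norm_nonneg _).trans (hh 0)
  refine (h.norm_le (by positivity)).2 fun x => abs_le_half_of_forall_abs_one_add_mul_le hc
    fun t => ?_
  simpa using ((1 + t • h).norm_coe_le_norm x).trans (hh t)

theorem supIccSeminorm_one (i : ℕ) : supIccSeminorm i 1 = 1 := by
  have : Nonempty (Icc (-(i : ℝ) - 1) ((i : ℝ) + 1)) :=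
    ⟨⟨0, by constructor <;> linarith [i.cast_nonneg (α := ℝ)]⟩⟩
  exact norm_one (α := C(Icc (-(i : ℝ) - 1) ((i : ℝ) + 1), ℝ))

theorem supIccSeminorm_le_half_of_forall_one_add_smul_le {i : ℕ} {h : C(ℝ, ℝ)} {c : ℝ}
    (hc : c < 2) (hh : ∀ t : ℝ, supIccSeminorm i (1 + t • h) ≤ c * max 1 |t|) :
    supIccSeminorm i h ≤ c / 2 :=
  ContinuousMap.norm_le_half_of_norm_one_add_smul_le hc hh

noncomputable abbrev FinGradedFrechet.ofNormed (E : Type) [NormedAddCommGroup E] [NormedSpace ℝ E]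
    [FiniteDimensional ℝ E] : FinGradedFrechet where
  carrier := E
  seminorms _ := normSeminorm ℝ E
  mono := monotone_const
  separating _ hx := norm_eq_zero.mp (hx 0)

theorem two_le_sq_of_supIccSeminorm_bounds {f : ℝ × ℝ →ₗ[ℝ] C(ℝ, ℝ)} {i : ℕ} {c : ℝ}
    (hf₁ : f (1, 0) = 1)
    (hf : ∀ y, c⁻¹ * ‖y‖ ≤ supIccSeminorm i (f y) ∧ supIccSeminorm i (f y) ≤ c * ‖y‖) :
    2 ≤ c ^ 2 := by
  have hc₁ : 1 ≤ c := by simpa [hf₁, supIccSeminorm_one] using (hf (1, 0)).2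
  by_contra! hc
  have hline (t : ℝ) : f (1, t) = 1 + t • f (0, 1) := by
    rw [← hf₁, ← map_smul, ← map_add]
    simp
  have upper : supIccSeminorm i (f (0, 1)) ≤ c / 2 :=
    supIccSeminorm_le_half_of_forall_one_add_smul_le (by nlinarith) fun t => by
      simpa [← hline] using (hf (1, t)).2
  have lower : c⁻¹ ≤ supIccSeminorm i (f (0, 1)) := by simpa using (hf (0, 1)).1
  have : c⁻¹ ≤ c / 2 := lower.trans upper
  rw [inv_le_iff_one_le_mul₀ (by linarith)] at this
  nlinarith

/-- The graded Fréchet space `C(ℝ, ℝ)`, with the increasing sequence of sup-seminorms over the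
intervals `[-i, i]`, is not of almost universal disposition for finite-dimensional graded
Fréchet spaces: there are `ε > 0`, finite-dimensional graded Fréchet spaces `X ⊆ Y` and an
isometric embedding `f₀ : X → C(ℝ, ℝ)` admitting no `ε`-isometric extension `f : Y → C(ℝ, ℝ)`. -/
theorem continuousMap_not_almost_universal_disposition :
    ∃ ε : ℝ, 0 < ε ∧
      ∃ (Y : FinGradedFrechet) (X : Submodule ℝ Y.carrier) (f₀ : X →ₗ[ℝ] C(ℝ, ℝ)),
        (∀ (i : ℕ) (x : X), supIccSeminorm i (f₀ x) = Y.seminorms i (x : Y.carrier)) ∧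
        ¬ ∃ f : Y.carrier →ₗ[ℝ] C(ℝ, ℝ),
            (∀ x : X, f (x : Y.carrier) = f₀ x) ∧
            ∀ (i : ℕ) (y : Y.carrier),
              (1 + ε)⁻¹ * Y.seminorms i y ≤ supIccSeminorm i (f y) ∧
              supIccSeminorm i (f y) ≤ (1 + ε) * Y.seminorms i y := by
  refine ⟨1 / 5, by norm_num, .ofNormed (ℝ × ℝ), LinearMap.ker (LinearMap.snd ℝ ℝ ℝ),
    LinearMap.smulRight ((LinearMap.fst ℝ ℝ ℝ).comp (LinearMap.ker _).subtype) 1, ?_, ?_⟩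
  · rintro i ⟨⟨a, b⟩, rfl : b = 0⟩
    simp [map_smul_eq_mul, supIccSeminorm_one]
  · rintro ⟨f, hf₀, hf⟩
    have := two_le_sq_of_supIccSeminorm_bounds (by simpa using hf₀ ⟨(1, 0), rfl⟩) (hf 0)
    norm_num at this
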